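/- arXiv:2509.11987 — 2 statements merged into one kernel-verified Lean document; each statement's English description precedes it below -/
import Mathlib

section
/- Let x : [t₀, ∞) → ℝⁿ be continuously differentiable and α ∈ (0,1]. Then for every t ≥ t₀, the Caputo fractional derivative of order α of the function t ↦ (1/2)‖x(t)‖² satisfies ᶜD_t^α (½‖x(t)‖²) ≤ ⟨x(t), ᶜD_t^α x(t)⟩. -/
open Real MeasureTheory

noncomputable def caputoR (α t₀ : ℝ) (y : ℝ → ℝ) (t : ℝ) : ℝ :=
  (1 / Real.Gamma (1 - α)) * ∫ s in t₀..t, (t - s) ^ (-α) * deriv y s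

noncomputable def caputoV {n : ℕ} (α t₀ : ℝ) (x : ℝ → EuclideanSpace ℝ (Fin n)) (t : ℝ) :
    EuclideanSpace ℝ (Fin n) :=
  (1 / Real.Gamma (1 - α)) • ∫ s in t₀..t, ((t - s) ^ (-α)) • deriv x s

/-!
With `w s = (t - s) ^ (-α)` and `g s = ½‖x s - x t‖²`, the left-hand side minus the right-hand side
is `Γ(1 - α)⁻¹ ∫_{t₀}^t w g'`. Since `w' = α (t - s) ^ (-α - 1)` is not integrable up to
`t`, integrate by parts on `[t₀, u]` with `u < t` instead: `∫ w g' = [w g] - ∫ w' g ≤ w u * g u`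
because `w`, `w'` and `g` are nonnegative. As `x` is differentiable at `t`,
`w u * g u = O((t - u) ^ (2 - α)) → 0` when `u → t⁻`.
-/

open Set Filter Topology
open scoped RealInnerProductSpace

section

variable {E : Type*} [NormedAddCommGroup E] [InnerProductSpace ℝ E]

theorem HasDerivAt.half_norm_sq {f : ℝ → E} {f' : E} {s : ℝ} (hf : HasDerivAt f f' s) :
    HasDerivAt (fun r => 1 / 2 * ‖f r‖ ^ 2) ⟪f s, f'⟫ s :=
  (hf.norm_sq.const_mul (1 / 2 : ℝ)).congr_deriv (by ring)

theorem intervalIntegrable_sub_rpow_neg {α : ℝ} (hα : α < 1) (a t : ℝ) :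
    IntervalIntegrable (fun s => (t - s) ^ (-α)) volume a t := by
  simpa using ((intervalIntegral.intervalIntegrable_rpow' (by linarith) (a := 0)
    (b := t - a)).comp_sub_left t).symm

theorem hasDerivAt_sub_rpow_neg {α t s : ℝ} (hs : s < t) :
    HasDerivAt (fun r => (t - r) ^ (-α)) (α * (t - s) ^ (-α - 1)) s := by
  convert ((hasDerivAt_id' s).const_sub t).rpow_const (p := -α) (Or.inl (by simp; linarith))
    using 1
  ring

theorem integral_mul_deriv_le_of_nonneg {u v u' v' : ℝ → ℝ} {a b : ℝ} (hab : a ≤ b)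
    (hu : ContinuousOn u (Icc a b)) (hv : ContinuousOn v (Icc a b))
    (huu' : ∀ s ∈ Ioo a b, HasDerivAt u (u' s) s) (hvv' : ∀ s ∈ Ioo a b, HasDerivAt v (v' s) s)
    (hu' : IntervalIntegrable u' volume a b) (hv' : IntervalIntegrable v' volume a b)
    (hu'_nonneg : ∀ s ∈ Icc a b, 0 ≤ u' s) (hv_nonneg : ∀ s ∈ Icc a b, 0 ≤ v s)
    (hua : 0 ≤ u a) :
    ∫ s in a..b, u s * v' s ≤ u b * v b := by
  rw [intervalIntegral.integral_mul_deriv_eq_deriv_mul_of_hasDerivAt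
    (by rwa [uIcc_of_le hab]) (by rwa [uIcc_of_le hab]) (by rwa [min_eq_left hab, max_eq_right hab])
    (by rwa [min_eq_left hab, max_eq_right hab]) hu' hv']
  have hboundary : 0 ≤ u a * v a := mul_nonneg hua (hv_nonneg a (left_mem_Icc.2 hab))
  have hbulk : 0 ≤ ∫ s in a..b, u' s * v s :=
    intervalIntegral.integral_nonneg hab fun s hs => mul_nonneg (hu'_nonneg s hs) (hv_nonneg s hs)
  linarith

theorem tendsto_sub_rpow_neg_mul_half_norm_sub_sq {x : ℝ → E} {α t : ℝ}
    (hx : DifferentiableAt ℝ x t) (hα : α < 2) :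
    Tendsto (fun u => (t - u) ^ (-α) * (1 / 2 * ‖x u - x t‖ ^ 2)) (𝓝[<] t) (𝓝 0) := by
  obtain ⟨C, hC⟩ := hx.hasDerivAt.isBigO_sub.bound
  have hbound : Tendsto (fun u => 1 / 2 * C ^ 2 * (t - u) ^ (2 - α)) (𝓝[<] t) (𝓝 0) := by
    have hcont : Continuous fun u : ℝ => (t - u) ^ (2 - α) :=
      (continuous_const.sub continuous_id).rpow_const fun _ => Or.inr (by linarith)
    have := hcont.tendsto t
    simpa [zero_rpow (by linarith : 2 - α ≠ 0)] using
      (this.const_mul (1 / 2 * C ^ 2)).mono_left nhdsWithin_le_nhds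
  refine tendsto_of_tendsto_of_tendsto_of_le_of_le' tendsto_const_nhds hbound ?_ ?_
  · filter_upwards [self_mem_nhdsWithin] with u (hu : u < t)
    have := rpow_nonneg (sub_nonneg.2 hu.le) (-α)
    positivity
  · filter_upwards [self_mem_nhdsWithin, nhdsWithin_le_nhds hC] with u (hu : u < t) hCu
    have htu : 0 < t - u := sub_pos.2 hu
    have hsq : ‖x u - x t‖ ^ 2 ≤ (C * (t - u)) ^ 2 := by
      rw [Real.norm_eq_abs, abs_sub_comm, abs_of_pos htu] at hCu
      exact pow_le_pow_left₀ (norm_nonneg _) hCu 2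
    calc (t - u) ^ (-α) * (1 / 2 * ‖x u - x t‖ ^ 2)
        ≤ (t - u) ^ (-α) * (1 / 2 * (C * (t - u)) ^ 2) := by gcongr
      _ = 1 / 2 * C ^ 2 * ((t - u) ^ (-α) * (t - u) ^ (2 : ℝ)) := by norm_cast; ring
      _ = 1 / 2 * C ^ 2 * (t - u) ^ (2 - α) := by
        rw [← rpow_add htu, neg_add_eq_sub]

theorem integral_sub_rpow_neg_mul_inner_sub_nonpos {x : ℝ → E} (hx : ContDiff ℝ 1 x)
    {α t₀ t : ℝ} (hα₀ : 0 < α) (hα₁ : α < 1) (ht : t₀ ≤ t) :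
    ∫ s in t₀..t, (t - s) ^ (-α) * ⟪x s - x t, deriv x s⟫ ≤ 0 := by
  obtain rfl | ht := ht.eq_or_lt
  · simp
  have hd : Differentiable ℝ x := hx.differentiable one_ne_zero
  have hv' : Continuous fun s => ⟪x s - x t, deriv x s⟫ :=
    (hx.continuous.sub continuous_const).inner (hx.continuous_deriv le_rfl)
  have hprimitive : Tendsto (fun u => ∫ s in t₀..u, (t - s) ^ (-α) * ⟪x s - x t, deriv x s⟫)
      (𝓝[<] t) (𝓝 (∫ s in t₀..t, (t - s) ^ (-α) * ⟪x s - x t, deriv x s⟫)) := by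
    have hcont := intervalIntegral.continuousOn_primitive_interval'
      ((intervalIntegrable_sub_rpow_neg hα₁ t₀ t).mul_continuousOn hv'.continuousOn)
      left_mem_uIcc t right_mem_uIcc
    rw [uIcc_of_le ht.le] at hcont
    exact hcont.tendsto.mono_left
      (nhdsWithin_le_of_mem (mem_of_superset (Ioo_mem_nhdsLT ht) Ioo_subset_Icc_self))
  refine le_of_tendsto_of_tendsto hprimitive
    (tendsto_sub_rpow_neg_mul_half_norm_sub_sq (α := α) (hd t) (by linarith)) ?_
  filter_upwards [Ioo_mem_nhdsLT ht] with u hu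
  have hlt : ∀ s ∈ Icc t₀ u, s < t := fun s hs => hs.2.trans_lt hu.2
  refine integral_mul_deriv_le_of_nonneg hu.1.le
    (fun s hs => (hasDerivAt_sub_rpow_neg (hlt s hs)).continuousAt.continuousWithinAt)
    (by have := hd.continuous; fun_prop)
    (fun s hs => hasDerivAt_sub_rpow_neg (hlt s (Ioo_subset_Icc_self hs)))
    (fun s _ => ((hd s).hasDerivAt.sub_const (x t)).half_norm_sq)
    (ContinuousOn.intervalIntegrable_of_Icc hu.1.le ?_) (hv'.intervalIntegrable _ _)
    (fun s hs => mul_nonneg hα₀.le (rpow_nonneg (sub_nonneg.2 (hlt s hs).le) _))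
    (fun s _ => by positivity) (rpow_nonneg (sub_nonneg.2 ht.le) _)
  exact continuousOn_const.mul ((continuousOn_const.sub continuousOn_id).rpow_const
    fun s hs => Or.inl (sub_ne_zero.2 (hlt s hs).ne'))

end

theorem caputoR_half_norm_sq {n : ℕ} {x : ℝ → EuclideanSpace ℝ (Fin n)} (hx : Differentiable ℝ x)
    (α t₀ t : ℝ) :
    caputoR α t₀ (fun s => 1 / 2 * ‖x s‖ ^ 2) t =
      1 / Gamma (1 - α) * ∫ s in t₀..t, (t - s) ^ (-α) * ⟪x s, deriv x s⟫ := by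
  simp only [caputoR, fun s => ((hx s).hasDerivAt.half_norm_sq).deriv]

theorem inner_caputoV {n : ℕ} {x : ℝ → EuclideanSpace ℝ (Fin n)} {α t₀ t : ℝ}
    (hx : IntervalIntegrable (fun s => (t - s) ^ (-α) • deriv x s) volume t₀ t)
    (v : EuclideanSpace ℝ (Fin n)) :
    ⟪v, caputoV α t₀ x t⟫ =
      1 / Gamma (1 - α) * ∫ s in t₀..t, (t - s) ^ (-α) * ⟪v, deriv x s⟫ := by
  rw [caputoV, real_inner_smul_right, ← innerSL_apply_apply ℝ,
    ← (innerSL ℝ v).intervalIntegral_comp_comm hx]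
  simp only [innerSL_apply_apply, real_inner_smul_right]

theorem stmt1 {n : ℕ} (α t₀ : ℝ) (hα : 0 < α ∧ α ≤ 1)
    (x : ℝ → EuclideanSpace ℝ (Fin n)) (hx : ContDiff ℝ 1 x) :
    ∀ t ≥ t₀,
      caputoR α t₀ (fun s => (1 / 2) * ‖x s‖ ^ 2) t ≤ (inner ℝ (x t) (caputoV α t₀ x t) : ℝ) := by
  intro t ht
  obtain rfl | hα₁ := hα.2.eq_or_lt
  · -- `Γ 0 = 0`, so both sides carry the junk factor `1 / 0 = 0`.
    simp [caputoR, caputoV]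
  have hx' : Continuous (deriv x) := hx.continuous_deriv le_rfl
  have hw := intervalIntegrable_sub_rpow_neg hα₁ t₀ t
  have hΓ : 0 ≤ 1 / Gamma (1 - α) := by
    have := Gamma_pos_of_pos (sub_pos.2 hα₁)
    positivity
  rw [caputoR_half_norm_sq (hx.differentiable one_ne_zero),
    inner_caputoV (hw.smul_continuousOn hx'.continuousOn), ← sub_nonpos, ← mul_sub,
    ← intervalIntegral.integral_sub (hw.mul_continuousOn (hx.continuous.inner hx').continuousOn)
      (hw.mul_continuousOn (continuous_const.inner hx').continuousOn)]
  refine mul_nonpos_of_nonneg_of_nonpos hΓ ?_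
  simpa only [← mul_sub, ← inner_sub_left] using
    integral_sub_rpow_neg_mul_inner_sub_nonpos hx hα.1 hα₁ ht
end

section
/- Let h : [t₀,∞) → ℝ be C² with h(t) ≥ 0, α > 1, and suppose h''(t) + (α/t) h'(t) ≤ g(t) for all t ≥ t₀, where g : [t₀,∞) → ℝ is nonnegative and satisfies ∫_{t₀}^∞ t g(t) dt < ∞. Then lim_{t→∞} h(t) exists (is finite). -/
open Filter MeasureTheory Set intervalIntegral

/-!
Multiplying the inequality by `t ^ α` turns it into `(t ^ α h')' ≤ t ^ α g`, so on `[T, ∞)` the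
derivative `h'` is bounded above by `t ^ (-α) * (C + ∫ s in T..t, s ^ α g s)`. This majorant is
integrable on `(T, ∞)` (Hardy's inequality): integrating by parts, the integral of its second
term is at most `(α - 1)⁻¹ ∫ s g s`. Since `h` is bounded below, `h'` itself is then integrable,
so `h` converges.
-/

theorem integrableOn_Ioi_deriv_of_le_of_bddBelow {f f' ψ : ℝ → ℝ} {T : ℝ}
    (hf : ∀ x ∈ Ici T, HasDerivAt f (f' x) x) (hf' : ContinuousOn f' (Ici T))
    (hle : ∀ x ∈ Ici T, f' x ≤ ψ x) (hψ : IntegrableOn ψ (Ioi T))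
    (hbdd : BddBelow (f '' Ici T)) : IntegrableOn f' (Ioi T) := by
  obtain ⟨m, hm⟩ := hbdd
  have hf'_Ioc : ∀ x, IntegrableOn f' (Ioc T x) := fun x =>
    ((hf'.mono Icc_subset_Ici_self).integrableOn_Icc).mono_set Ioc_subset_Icc_self
  have hgap : IntegrableOn (fun x => ψ x - f' x) (Ioi T) := by
    refine integrableOn_Ioi_of_intervalIntegral_norm_bounded
      ((∫ x in Ioi T, ‖ψ x‖) + f T - m) T
      (fun x => (hψ.mono_set Ioc_subset_Ioi_self).sub (hf'_Ioc x)) tendsto_id ?_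
    filter_upwards [eventually_ge_atTop T] with x hx
    have hψx : ∫ t in T..x, ψ t ≤ ∫ t in Ioi T, ‖ψ t‖ := by
      rw [integral_of_le hx]
      exact (setIntegral_mono_on (hψ.mono_set Ioc_subset_Ioi_self)
        (IntegrableOn.mono_set hψ.norm Ioc_subset_Ioi_self) measurableSet_Ioc
          fun t _ => Real.le_norm_self _).trans
        (setIntegral_mono_set hψ.norm (Eventually.of_forall fun t => norm_nonneg _)
          Ioc_subset_Ioi_self.eventuallyLE)
    have hftc : ∫ t in T..x, f' t = f x - f T :=
      integral_eq_sub_of_hasDerivAt (fun t ht => hf t (by rw [uIcc_of_le hx] at ht; exact ht.1))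
        ((intervalIntegrable_iff_integrableOn_Ioc_of_le hx).2 (hf'_Ioc x))
    calc ∫ t in T..x, ‖ψ t - f' t‖ = ∫ t in T..x, (ψ t - f' t) :=
          integral_congr fun t ht => Real.norm_of_nonneg <| sub_nonneg.2 <|
            hle t (by rw [uIcc_of_le hx] at ht; exact ht.1)
      _ = (∫ t in T..x, ψ t) - (f x - f T) := by
          rw [integral_sub ((intervalIntegrable_iff_integrableOn_Ioc_of_le hx).2
            (hψ.mono_set Ioc_subset_Ioi_self))
            ((intervalIntegrable_iff_integrableOn_Ioc_of_le hx).2 (hf'_Ioc x)), hftc]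
      _ ≤ (∫ t in Ioi T, ‖ψ t‖) + f T - m := by linarith [hm (mem_image_of_mem f hx)]
  exact (hψ.sub hgap).congr_fun (fun x _ => sub_sub_cancel _ _) measurableSet_Ioi

theorem ContinuousOn.integral_hasDerivAt_right {q : ℝ → ℝ} {s : Set ℝ} {a b : ℝ}
    (hq : ContinuousOn q s) (hs : IsOpen s) (hab : uIcc a b ⊆ s) :
    HasDerivAt (fun x => ∫ y in a..x, q y) (q b) b :=
  intervalIntegral.integral_hasDerivAt_right ((hq.mono hab).intervalIntegrable)
    (hq.stronglyMeasurableAtFilter hs b (hab right_mem_uIcc))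
    (hq.continuousAt (hs.mem_nhds (hab right_mem_uIcc)))

theorem integrableOn_Ioi_rpow_neg_mul_integral {α T : ℝ} {q : ℝ → ℝ} (hα : 1 < α) (hT : 0 < T)
    (hq : ContinuousOn q (Ioi 0)) (hq0 : ∀ s ∈ Ici T, 0 ≤ q s)
    (hqi : IntegrableOn (fun s => s ^ (1 - α) * q s) (Ioi T)) :
    IntegrableOn (fun t => t ^ (-α) * ∫ s in T..t, q s) (Ioi T) := by
  set U := fun t => ∫ s in T..t, q s
  set V := fun t => ∫ s in T..t, s ^ (1 - α) * q s
  -- An antiderivative of `t ^ (-α) * U t`, by parts against `t ^ (1 - α) / (1 - α)`.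
  set W := fun t => t ^ (1 - α) / (1 - α) * U t + (α - 1)⁻¹ * V t
  have hα1 : (1 : ℝ) - α ≠ 0 := by linarith
  have hp : ContinuousOn (fun s => s ^ (1 - α) * q s) (Ioi 0) :=
    (continuousOn_id.rpow_const fun s hs => Or.inl (ne_of_gt hs)).mul hq
  have hsub : ∀ t ∈ Ici T, uIcc T t ⊆ Ioi 0 := fun t ht s hs => by
    rw [uIcc_of_le ht] at hs; exact hT.trans_le hs.1
  have hU : ∀ t ∈ Ici T, HasDerivAt U (q t) t := fun t ht =>
    hq.integral_hasDerivAt_right isOpen_Ioi (hsub t ht)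
  have hU0 : ∀ t ∈ Ici T, 0 ≤ U t := fun t ht =>
    integral_nonneg ht fun s hs => hq0 s hs.1
  have hW : ∀ t ∈ Ici T, HasDerivAt W (t ^ (-α) * U t) t := by
    intro t ht
    have hpow : HasDerivAt (fun t => t ^ (1 - α) / (1 - α)) (t ^ (-α)) t := by
      refine ((Real.hasDerivAt_rpow_const (Or.inl (hT.trans_le ht).ne')).div_const
        (1 - α)).congr_deriv ?_
      rw [show 1 - α - 1 = -α by ring, mul_div_cancel_left₀ _ hα1]
    refine ((hpow.mul (hU t ht)).add ((hp.integral_hasDerivAt_right isOpen_Ioi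
      (hsub t ht)).const_mul (α - 1)⁻¹)).congr_deriv ?_
    have hα1' : α - 1 ≠ 0 := by linarith
    field_simp
    ring
  have hV : ∀ x ∈ Ici T, V x ≤ ∫ s in Ioi T, s ^ (1 - α) * q s := fun x hx => by
    rw [show V x = _ from integral_of_le hx]
    refine setIntegral_mono_set hqi ?_ Ioc_subset_Ioi_self.eventuallyLE
    filter_upwards [ae_restrict_mem measurableSet_Ioi] with s hs
    exact mul_nonneg (Real.rpow_nonneg (hT.trans hs).le _) (hq0 s (mem_Ici_of_Ioi hs))
  have hW_le : ∀ x ∈ Ici T, W x ≤ (α - 1)⁻¹ * ∫ s in Ioi T, s ^ (1 - α) * q s := fun x hx => by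
    have h₁ : x ^ (1 - α) / (1 - α) * U x ≤ 0 :=
      mul_nonpos_of_nonpos_of_nonneg
        (div_nonpos_of_nonneg_of_nonpos (Real.rpow_nonneg (hT.trans_le hx).le _) (by linarith))
        (hU0 x hx)
    have h₂ := mul_le_mul_of_nonneg_left (hV x hx) (inv_nonneg.2 (by linarith : (0 : ℝ) ≤ α - 1))
    linarith
  have hcont : ContinuousOn (fun t => -(t ^ (-α) * U t)) (Ici T) := fun t ht =>
    ((Real.continuousAt_rpow_const _ _ (Or.inl (hT.trans_le ht).ne')).mul
      (hU t ht).continuousAt).neg.continuousWithinAt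
  simpa using (integrableOn_Ioi_deriv_of_le_of_bddBelow (fun t ht => (hW t ht).neg) hcont
    (fun x hx => neg_nonpos.2 (mul_nonneg (Real.rpow_nonneg (hT.trans_le hx).le _) (hU0 x hx)))
    integrableOn_zero ⟨_, forall_mem_image.2 fun x hx => neg_le_neg (hW_le x hx)⟩).neg

theorem HasDerivAt.rpow_mul_of_pos {u : ℝ → ℝ} {u' α t : ℝ} (hu : HasDerivAt u u' t) (ht : 0 < t) :
    HasDerivAt (fun t => t ^ α * u t) (t ^ α * (u' + α / t * u t)) t := by
  refine ((Real.hasDerivAt_rpow_const (p := α) (Or.inl ht.ne')).mul hu).congr_deriv ?_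
  rw [Real.rpow_sub_one ht.ne']
  ring

theorem exists_integrableOn_Ioi_ge_of_deriv_add_div_mul_le {u g : ℝ → ℝ} {α T : ℝ}
    (hα : 1 < α) (hT : 0 < T) (hu : Differentiable ℝ u) (hu' : Continuous (deriv u))
    (hineq : ∀ t ∈ Ici T, deriv u t + α / t * u t ≤ g t) (hg : ∀ t ∈ Ici T, 0 ≤ g t)
    (hint : IntegrableOn (fun t => t * g t) (Ioi T)) :
    ∃ ψ : ℝ → ℝ, IntegrableOn ψ (Ioi T) ∧ ∀ t ∈ Ici T, u t ≤ ψ t := by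
  -- `q ≤ t ^ α * g` on `[T, ∞)`, and unlike `g` it is continuous.
  set q : ℝ → ℝ := fun t => max (t ^ α * (deriv u t + α / t * u t)) 0
  have hφ : ∀ t ∈ Ioi (0 : ℝ), HasDerivAt (fun t => t ^ α * u t)
      (t ^ α * (deriv u t + α / t * u t)) t := fun t ht =>
    (hu t).hasDerivAt.rpow_mul_of_pos ht
  have hq : ContinuousOn q (Ioi 0) := by
    have := hu.continuous
    fun_prop (disch := intro t ht; exact ne_of_gt ht)
  have hq_le : ∀ s ∈ Ici T, q s ≤ s ^ α * g s := fun s hs =>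
    max_le (mul_le_mul_of_nonneg_left (hineq s hs) (Real.rpow_nonneg (hT.trans_le hs).le _))
      (mul_nonneg (Real.rpow_nonneg (hT.trans_le hs).le _) (hg s hs))
  have hqi : IntegrableOn (fun s => s ^ (1 - α) * q s) (Ioi T) := by
    refine hint.mono' (((continuousOn_id.rpow_const fun s hs => Or.inl (ne_of_gt hs)).mul hq).mono
      (Ioi_subset_Ioi hT.le) |>.aestronglyMeasurable measurableSet_Ioi) ?_
    filter_upwards [ae_restrict_mem measurableSet_Ioi] with s hs
    have hs0 : 0 < s := hT.trans hs
    rw [Real.norm_of_nonneg (mul_nonneg (Real.rpow_nonneg hs0.le _) (le_max_right _ _))]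
    calc s ^ (1 - α) * q s ≤ s ^ (1 - α) * (s ^ α * g s) :=
          mul_le_mul_of_nonneg_left (hq_le s (mem_Ici_of_Ioi hs)) (Real.rpow_nonneg hs0.le _)
      _ = s * g s := by rw [← mul_assoc, ← Real.rpow_add hs0, sub_add_cancel, Real.rpow_one]
  refine ⟨fun t => t ^ (-α) * (T ^ α * u T) + t ^ (-α) * ∫ s in T..t, q s,
    ((integrableOn_Ioi_rpow_of_lt (by linarith) hT).mul_const _).add
      (integrableOn_Ioi_rpow_neg_mul_integral hα hT hq
        (fun s hs => le_max_right _ _) hqi), fun t ht => ?_⟩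
  have ht0 : 0 < t := hT.trans_le ht
  have hIcc : Icc T t ⊆ Ioi 0 := fun s hs => hT.trans_le hs.1
  have hφ_le : t ^ α * u t - T ^ α * u T ≤ ∫ s in T..t, q s :=
    sub_le_integral_of_hasDeriv_right_of_le ht
      (fun s hs => (hφ s (hIcc hs)).continuousAt.continuousWithinAt)
      (fun s hs => (hφ s (hIcc (Ioo_subset_Icc_self hs))).hasDerivWithinAt)
      ((hq.mono hIcc).integrableOn_Icc) (fun s _ => le_max_left _ _)
  calc u t = t ^ (-α) * (t ^ α * u t) := by
        rw [Real.rpow_neg ht0.le, inv_mul_cancel_left₀ (Real.rpow_pos_of_pos ht0 α).ne']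
    _ ≤ t ^ (-α) * (T ^ α * u T + ∫ s in T..t, q s) :=
        mul_le_mul_of_nonneg_left (by linarith) (Real.rpow_nonneg ht0.le _)
    _ = _ := mul_add _ _ _

theorem stmt18 (t₀ α : ℝ) (hα : 1 < α) (h g : ℝ → ℝ) (hC2 : ContDiff ℝ 2 h)
    (hnn : ∀ t ≥ t₀, 0 ≤ h t) (hg : ∀ t ≥ t₀, 0 ≤ g t)
    (hineq : ∀ t ≥ t₀, deriv (deriv h) t + (α / t) * deriv h t ≤ g t)
    (hint : MeasureTheory.IntegrableOn (fun t => t * g t) (Set.Ici t₀)) :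
    ∃ l : ℝ, Tendsto h atTop (nhds l) := by
  have hh : Differentiable ℝ h := hC2.differentiable (by norm_num)
  have hC1 : ContDiff ℝ 1 (deriv h) := hC2.deriv'
  set T := max t₀ 1
  have hT : 0 < T := zero_lt_one.trans_le (le_max_right _ _)
  have ht₀ : ∀ t ∈ Ici T, t ≥ t₀ := fun t ht => (le_max_left _ _).trans ht
  obtain ⟨ψ, hψ, hle⟩ := exists_integrableOn_Ioi_ge_of_deriv_add_div_mul_le hα hT
    (hC1.differentiable one_ne_zero) (hC1.continuous_deriv le_rfl)
    (fun t ht => hineq t (ht₀ t ht)) (fun t ht => hg t (ht₀ t ht))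
    (hint.mono_set fun t ht => ht₀ t (mem_Ici_of_Ioi ht))
  have hderiv := integrableOn_Ioi_deriv_of_le_of_bddBelow (fun t _ => (hh t).hasDerivAt)
    hC1.continuous.continuousOn hle hψ ⟨0, forall_mem_image.2 fun t ht => hnn t (ht₀ t ht)⟩
  exact ⟨_, tendsto_limUnder_of_hasDerivAt_of_integrableOn_Ioi
    (fun t _ => (hh t).hasDerivAt) hderiv⟩
end
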